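/- (Unconditional bound on the numerical solution.) Assume all frequencies are nonzero (ω_j ≠ 0 for all j) and that the minimal frequency ω satisfies ω ≥ (1/2)c₀²‖A‖ + 1. Then for all n ∈ ℕ, (1/2)‖q_n‖² + (1/2)‖q̇_n‖² ≤ |ℋ(q_0, q̇_0)|, and consequently ‖q_n‖ is bounded by a constant depending only on c₀, ‖A‖, ‖q_0‖, ‖Ωq_0‖, ‖q̇_0‖. -/

import Mathlib

/-!
One step of the integrator is a half kick `p ↦ p + ½hΨ₁g(Φq)`, the exact rotation by `hΩ` of
`(Ωq, p)`, and another half kick. Writing `ℋ` in terms of the kicked momenta absorbs its `h²`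
term, the rotation preserves `‖Ωq‖² + ‖p‖²`, and since `Ψ₁ = sinc·Φ` the remaining cross terms
before and after the step collapse to `⟨Φq_{n+1}, AΦq_n⟩` and `⟨Φq_n, AΦq_{n+1}⟩`, which agree
because `A` is self-adjoint. So `ℋ` is exactly conserved. It differs from `½‖Ωq‖² + ½‖p‖²` by at
most `½c₀²‖A‖‖q‖² + ⅛(c₀²‖A‖‖q‖)²`, and `ω ≥ ½c₀²‖A‖ + 1` makes this at most `½‖Ωq‖² - ½‖q‖²`.
-/

open scoped BigOperators

/-- `sinc ξ = sin ξ / ξ` with `sinc 0 = 1`. -/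
noncomputable def sinc (x : ℝ) : ℝ := if x = 0 then 1 else Real.sin x / x

/-- Entrywise (diagonal-matrix) action of a real function family on `ℂ^d`. -/
noncomputable def dOp {d : ℕ} (f : Fin d → ℝ) (q : EuclideanSpace ℂ (Fin d)) :
    EuclideanSpace ℂ (Fin d) := WithLp.toLp 2 (fun i => (f i : ℂ) * q i)

/-- Position update of the trigonometric integrator for the linear force `g(q) = -A q`:
`q_{n+1} = cos(hΩ) q_n + h sinc(hΩ) q̇_n + ½h² sinc(hΩ) Ψ₁ g(Φ q_n)`. -/
noncomputable def trigStepQ {d : ℕ} (h : ℝ) (ω : Fin d → ℝ) (ψ₁ φ : ℝ → ℝ)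
    (A : EuclideanSpace ℂ (Fin d) →L[ℂ] EuclideanSpace ℂ (Fin d))
    (q p : EuclideanSpace ℂ (Fin d)) : EuclideanSpace ℂ (Fin d) :=
  dOp (fun i => Real.cos (h * ω i)) q + h • dOp (fun i => sinc (h * ω i)) p
    + (h ^ 2 / 2) • dOp (fun i => sinc (h * ω i))
        (dOp (fun i => ψ₁ (h * ω i)) (-(A (dOp (fun i => φ (h * ω i)) q))))

/-- Velocity update of the trigonometric integrator for the linear force `g(q) = -A q`:
`q̇_{n+1} = -Ω sin(hΩ) q_n + cos(hΩ) q̇_n + ½h (cos(hΩ) Ψ₁ g(Φ q_n) + Ψ₁ g(Φ q_{n+1}))`. -/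
noncomputable def trigStepP {d : ℕ} (h : ℝ) (ω : Fin d → ℝ) (ψ₁ φ : ℝ → ℝ)
    (A : EuclideanSpace ℂ (Fin d) →L[ℂ] EuclideanSpace ℂ (Fin d))
    (q p : EuclideanSpace ℂ (Fin d)) : EuclideanSpace ℂ (Fin d) :=
  -(dOp (fun i => ω i * Real.sin (h * ω i)) q) + dOp (fun i => Real.cos (h * ω i)) p
    + (h / 2) • (dOp (fun i => Real.cos (h * ω i))
          (dOp (fun i => ψ₁ (h * ω i)) (-(A (dOp (fun i => φ (h * ω i)) q))))
        + dOp (fun i => ψ₁ (h * ω i))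
            (-(A (dOp (fun i => φ (h * ω i)) (trigStepQ h ω ψ₁ φ A q p)))))

/-- The modified energy
`ℋ(q,q̇) = ½‖Ωq‖² + ½‖q̇‖² + ½ Re((cos(hΩ)Φq)* A Φq) − ⅛h²‖Ψ₁ A Φq‖²`. -/
noncomputable def modEnergy {d : ℕ} (h : ℝ) (ω : Fin d → ℝ) (ψ₁ φ : ℝ → ℝ)
    (A : EuclideanSpace ℂ (Fin d) →L[ℂ] EuclideanSpace ℂ (Fin d))
    (q p : EuclideanSpace ℂ (Fin d)) : ℝ :=
  (1 / 2) * ‖dOp ω q‖ ^ 2 + (1 / 2) * ‖p‖ ^ 2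
    + (1 / 2) * (inner (𝕜 := ℂ) (dOp (fun i => Real.cos (h * ω i)) (dOp (fun i => φ (h * ω i)) q))
        (A (dOp (fun i => φ (h * ω i)) q))).re
    - (1 / 8) * h ^ 2 * ‖dOp (fun i => ψ₁ (h * ω i)) (A (dOp (fun i => φ (h * ω i)) q))‖ ^ 2

/-- The total energy `H(q,q̇) = ½‖Ωq‖² + ½‖q̇‖² + ½ q* A q` of `q̈ = -Ω²q - Aq`. -/
noncomputable def energy {d : ℕ} (ω : Fin d → ℝ)
    (A : EuclideanSpace ℂ (Fin d) →L[ℂ] EuclideanSpace ℂ (Fin d))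
    (q p : EuclideanSpace ℂ (Fin d)) : ℝ :=
  (1 / 2) * ‖dOp ω q‖ ^ 2 + (1 / 2) * ‖p‖ ^ 2 + (1 / 2) * (inner (𝕜 := ℂ) q (A q)).re

open scoped InnerProductSpace

/-- `⟪x, y⟫_ℝ` is the `PiLp` inner product over `ℂ` seen as a real inner product space, which is
not definitionally `re ⟪x, y⟫_ℂ`. -/
theorem re_inner_eq_real_inner {ι : Type*} [Fintype ι] (x y : EuclideanSpace ℂ ι) :
    (inner ℂ x y).re = ⟪x, y⟫_ℝ := by
  simp only [PiLp.inner_apply, Complex.re_sum, Complex.inner, RCLike.inner_apply]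

theorem real_inner_map_left_of_isSelfAdjoint {ι : Type*} [Fintype ι]
    {A : EuclideanSpace ℂ ι →L[ℂ] EuclideanSpace ℂ ι} (hA : IsSelfAdjoint A)
    (x y : EuclideanSpace ℂ ι) : ⟪A x, y⟫_ℝ = ⟪x, A y⟫_ℝ := by
  rw [← re_inner_eq_real_inner, ← re_inner_eq_real_inner]
  exact congrArg Complex.re (ContinuousLinearMap.isSelfAdjoint_iff_isSymmetric.1 hA x y)

theorem norm_sq_add_norm_sq_rotation {F : Type*} [NormedAddCommGroup F] [InnerProductSpace ℝ F]
    {c s : ℝ} (hcs : c ^ 2 + s ^ 2 = 1) (a b : F) :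
    ‖c • a + s • b‖ ^ 2 + ‖-(s • a) + c • b‖ ^ 2 = ‖a‖ ^ 2 + ‖b‖ ^ 2 := by
  simp only [norm_add_sq_real, norm_neg, inner_neg_left, real_inner_smul_left,
    real_inner_smul_right, norm_smul, mul_pow, Real.norm_eq_abs, sq_abs]
  linear_combination (‖a‖ ^ 2 + ‖b‖ ^ 2) * hcs

theorem mul_mul_sinc (h x : ℝ) : x * (h * sinc (h * x)) = Real.sin (h * x) := by
  unfold sinc
  split_ifs with hx
  · simp [hx, mul_comm x h]
  · rw [← mul_assoc, mul_comm x h, mul_div_cancel₀ _ hx]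

section DiagonalOperator

variable {d : ℕ}

theorem dOp_apply (f : Fin d → ℝ) (x : EuclideanSpace ℂ (Fin d)) (i : Fin d) :
    dOp f x i = f i • x i := by
  simp [dOp, Complex.real_smul]

theorem dOp_dOp (f g : Fin d → ℝ) (x : EuclideanSpace ℂ (Fin d)) :
    dOp f (dOp g x) = dOp (fun i => f i * g i) x := by
  ext i; simp only [dOp_apply, smul_smul]

theorem dOp_add (f : Fin d → ℝ) (x y : EuclideanSpace ℂ (Fin d)) :
    dOp f (x + y) = dOp f x + dOp f y := by
  ext i; simp only [dOp_apply, PiLp.add_apply, smul_add]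

theorem dOp_smul (f : Fin d → ℝ) (r : ℝ) (x : EuclideanSpace ℂ (Fin d)) :
    dOp f (r • x) = r • dOp f x := by
  ext i; simp only [dOp_apply, PiLp.smul_apply, smul_comm (f i) r]

theorem dOp_neg (f : Fin d → ℝ) (x : EuclideanSpace ℂ (Fin d)) : dOp f (-x) = -dOp f x := by
  ext i; simp only [dOp_apply, PiLp.neg_apply, smul_neg]

theorem inner_dOp_left (f : Fin d → ℝ) (x y : EuclideanSpace ℂ (Fin d)) :
    ⟪dOp f x, y⟫_ℝ = ⟪x, dOp f y⟫_ℝ := by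
  simp only [PiLp.inner_apply, dOp_apply, real_inner_smul_left, real_inner_smul_right]

theorem norm_dOp_sq (f : Fin d → ℝ) (x : EuclideanSpace ℂ (Fin d)) :
    ‖dOp f x‖ ^ 2 = ∑ i, f i ^ 2 * ‖x i‖ ^ 2 := by
  simp only [EuclideanSpace.norm_sq_eq, dOp_apply, norm_smul, mul_pow, Real.norm_eq_abs, sq_abs]

theorem norm_dOp_le {f : Fin d → ℝ} {M : ℝ} (hM : 0 ≤ M) (hf : ∀ i, |f i| ≤ M)
    (x : EuclideanSpace ℂ (Fin d)) : ‖dOp f x‖ ≤ M * ‖x‖ := by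
  refine (pow_le_pow_iff_left₀ (norm_nonneg _) (by positivity) two_ne_zero).1 ?_
  rw [norm_dOp_sq, mul_pow, EuclideanSpace.norm_sq_eq, Finset.mul_sum]
  refine Finset.sum_le_sum fun i _ => mul_le_mul_of_nonneg_right ?_ (sq_nonneg _)
  exact sq_le_sq' (abs_le.1 (hf i)).1 (abs_le.1 (hf i)).2

theorem mul_norm_le_norm_dOp {f : Fin d → ℝ} {m : ℝ} (hm : 0 ≤ m) (hf : ∀ i, m ≤ f i)
    (x : EuclideanSpace ℂ (Fin d)) : m * ‖x‖ ≤ ‖dOp f x‖ := by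
  refine (pow_le_pow_iff_left₀ (by positivity) (norm_nonneg _) two_ne_zero).1 ?_
  rw [norm_dOp_sq, mul_pow, EuclideanSpace.norm_sq_eq, Finset.mul_sum]
  refine Finset.sum_le_sum fun i _ => mul_le_mul_of_nonneg_right ?_ (sq_nonneg _)
  exact pow_le_pow_left₀ hm (hf i) 2

end DiagonalOperator

section TrigonometricIntegrator

variable {d : ℕ} (h : ℝ) (ω : Fin d → ℝ) (ψ₁ φ : ℝ → ℝ)
  (A : EuclideanSpace ℂ (Fin d) →L[ℂ] EuclideanSpace ℂ (Fin d))

theorem norm_sq_add_norm_sq_trigRotation (q r : EuclideanSpace ℂ (Fin d)) :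
    ‖dOp ω (dOp (fun i => Real.cos (h * ω i)) q + h • dOp (fun i => sinc (h * ω i)) r)‖ ^ 2
      + ‖-dOp (fun i => ω i * Real.sin (h * ω i)) q + dOp (fun i => Real.cos (h * ω i)) r‖ ^ 2
      = ‖dOp ω q‖ ^ 2 + ‖r‖ ^ 2 := by
  simp only [EuclideanSpace.norm_sq_eq, ← Finset.sum_add_distrib]
  refine Finset.sum_congr rfl fun i _ => ?_
  have hQ : dOp ω (dOp (fun i => Real.cos (h * ω i)) q + h • dOp (fun i => sinc (h * ω i)) r) i
      = Real.cos (h * ω i) • ω i • q i + Real.sin (h * ω i) • r i := by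
    simp only [dOp_apply, PiLp.add_apply, PiLp.smul_apply, ← mul_mul_sinc h (ω i)]
    module
  have hP : (-dOp (fun i => ω i * Real.sin (h * ω i)) q + dOp (fun i => Real.cos (h * ω i)) r) i
      = -(Real.sin (h * ω i) • ω i • q i) + Real.cos (h * ω i) • r i := by
    simp only [dOp_apply, PiLp.add_apply, PiLp.neg_apply]
    module
  rw [hQ, hP, dOp_apply]
  exact norm_sq_add_norm_sq_rotation (Real.cos_sq_add_sin_sq (h * ω i)) (ω i • q i) (r i)

noncomputable def halfKick (q : EuclideanSpace ℂ (Fin d)) : EuclideanSpace ℂ (Fin d) :=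
  (h / 2) • dOp (fun i => ψ₁ (h * ω i)) (-(A (dOp (fun i => φ (h * ω i)) q)))

theorem trigStepQ_eq_halfKick (q p : EuclideanSpace ℂ (Fin d)) :
    trigStepQ h ω ψ₁ φ A q p = dOp (fun i => Real.cos (h * ω i)) q
      + h • dOp (fun i => sinc (h * ω i)) (p + halfKick h ω ψ₁ φ A q) := by
  rw [trigStepQ, halfKick, dOp_add, dOp_smul, smul_add, smul_smul, add_assoc]
  ring_nf

theorem trigStepP_eq_halfKick (q p : EuclideanSpace ℂ (Fin d)) :
    trigStepP h ω ψ₁ φ A q p = -dOp (fun i => ω i * Real.sin (h * ω i)) q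
      + dOp (fun i => Real.cos (h * ω i)) (p + halfKick h ω ψ₁ φ A q)
      + halfKick h ω ψ₁ φ A (trigStepQ h ω ψ₁ φ A q p) := by
  rw [trigStepP, halfKick, halfKick, dOp_add, dOp_smul, smul_add]
  abel

theorem modEnergy_eq_halfKick (q p : EuclideanSpace ℂ (Fin d)) :
    modEnergy h ω ψ₁ φ A q p = (1 / 2) * ‖dOp ω q‖ ^ 2 + (1 / 2) * ‖p‖ ^ 2
      + (1 / 2) * ⟪dOp (fun i => Real.cos (h * ω i)) (dOp (fun i => φ (h * ω i)) q),
          A (dOp (fun i => φ (h * ω i)) q)⟫_ℝ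
      - (1 / 2) * ‖halfKick h ω ψ₁ φ A q‖ ^ 2 := by
  rw [modEnergy, halfKick, re_inner_eq_real_inner, norm_smul, dOp_neg, norm_neg, mul_pow,
    Real.norm_eq_abs, sq_abs]
  ring

variable {ψ₁ φ}

theorem inner_halfKick (hψφ : ∀ ξ, ψ₁ ξ = sinc ξ * φ ξ) (x y : EuclideanSpace ℂ (Fin d)) :
    ⟪y, halfKick h ω ψ₁ φ A x⟫_ℝ = -(1 / 2) * ⟪dOp (fun i => φ (h * ω i))
      (h • dOp (fun i => sinc (h * ω i)) y), A (dOp (fun i => φ (h * ω i)) x)⟫_ℝ := by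
  have hψ : (fun i => ψ₁ (h * ω i)) = fun i => φ (h * ω i) * sinc (h * ω i) := by
    funext i; rw [hψφ, mul_comm]
  rw [halfKick, real_inner_smul_right, ← inner_dOp_left, hψ, ← dOp_dOp, inner_neg_right,
    dOp_smul, real_inner_smul_left]
  ring

end TrigonometricIntegrator

section Conservation

variable {d : ℕ} (h : ℝ) (ω : Fin d → ℝ) {ψ₁ φ : ℝ → ℝ}
  {A : EuclideanSpace ℂ (Fin d) →L[ℂ] EuclideanSpace ℂ (Fin d)}

theorem modEnergy_trigStep (hψφ : ∀ ξ, ψ₁ ξ = sinc ξ * φ ξ) (hA : IsSelfAdjoint A)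
    (q p : EuclideanSpace ℂ (Fin d)) :
    modEnergy h ω ψ₁ φ A (trigStepQ h ω ψ₁ φ A q p) (trigStepP h ω ψ₁ φ A q p)
      = modEnergy h ω ψ₁ φ A q p := by
  have hpIn : ‖p‖ ^ 2 = ‖p + halfKick h ω ψ₁ φ A q‖ ^ 2
      - 2 * ⟪p + halfKick h ω ψ₁ φ A q, halfKick h ω ψ₁ φ A q⟫_ℝ
      + ‖halfKick h ω ψ₁ φ A q‖ ^ 2 := by
    rw [← norm_sub_sq_real, add_sub_cancel_right]
  rw [modEnergy_eq_halfKick, modEnergy_eq_halfKick, trigStepP_eq_halfKick, norm_add_sq_real, hpIn,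
    inner_halfKick h ω A hψφ, inner_halfKick h ω A hψφ]
  have hQ := trigStepQ_eq_halfKick h ω ψ₁ φ A q p
  set Q := trigStepQ h ω ψ₁ φ A q p
  set pIn := p + halfKick h ω ψ₁ φ A q
  set Φ := dOp (fun i => φ (h * ω i))
  set C := dOp (fun i => Real.cos (h * ω i))
  set pOut := -dOp (fun i => ω i * Real.sin (h * ω i)) q + C pIn
  have hrot : ‖dOp ω Q‖ ^ 2 + ‖pOut‖ ^ 2 = ‖dOp ω q‖ ^ 2 + ‖pIn‖ ^ 2 := by
    rw [hQ]; exact norm_sq_add_norm_sq_trigRotation h ω q pIn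
  have hIn : C (Φ q) + Φ (h • dOp (fun i => sinc (h * ω i)) pIn) = Φ Q := by
    rw [hQ]; ext i
    simp only [Φ, C, dOp_apply, PiLp.add_apply, PiLp.smul_apply]
    module
  have hOut : C (Φ Q) - Φ (h • dOp (fun i => sinc (h * ω i)) pOut) = Φ q := by
    rw [hQ]; ext i
    simp only [Φ, C, pOut, dOp_apply, PiLp.add_apply, PiLp.sub_apply, PiLp.smul_apply,
      PiLp.neg_apply]
    have hs := mul_mul_sinc h (ω i)
    have hcs := Real.cos_sq_add_sin_sq (h * ω i)
    -- the coefficient of `q i` is `φ (cos² + sin · ω h sinc) = φ (cos² + sin²)`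
    linear_combination (norm := module)
      (φ (h * ω i) * hcs + φ (h * ω i) * Real.sin (h * ω i) * hs) • q i
  have hInner : ⟪Φ Q, A (Φ q)⟫_ℝ = ⟪Φ q, A (Φ Q)⟫_ℝ := by
    rw [← real_inner_map_left_of_isSelfAdjoint hA, real_inner_comm]
  have hKickIn : ⟪C (Φ q), A (Φ q)⟫_ℝ + ⟪Φ (h • dOp (fun i => sinc (h * ω i)) pIn), A (Φ q)⟫_ℝ
      = ⟪Φ Q, A (Φ q)⟫_ℝ := by
    rw [← inner_add_left, hIn]
  have hKickOut : ⟪C (Φ Q), A (Φ Q)⟫_ℝ - ⟪Φ (h • dOp (fun i => sinc (h * ω i)) pOut), A (Φ Q)⟫_ℝ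
      = ⟪Φ q, A (Φ Q)⟫_ℝ := by
    rw [← inner_sub_left, hOut]
  linarith

end Conservation

section Bounds

variable {d : ℕ} {h : ℝ} (ω : Fin d → ℝ) {ψ₁ φ : ℝ → ℝ} {c₀ : ℝ}
  (A : EuclideanSpace ℂ (Fin d) →L[ℂ] EuclideanSpace ℂ (Fin d))

theorem abs_modEnergy_sub_le (hh : |h| ≤ 1) (hψ : ∀ ξ, |ψ₁ ξ| ≤ c₀) (hφ : ∀ ξ, |φ ξ| ≤ c₀)
    (q p : EuclideanSpace ℂ (Fin d)) :
    |modEnergy h ω ψ₁ φ A q p - ((1 / 2) * ‖dOp ω q‖ ^ 2 + (1 / 2) * ‖p‖ ^ 2)|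
      ≤ (1 / 2) * (c₀ ^ 2 * ‖A‖ * ‖q‖ ^ 2) + (1 / 8) * (c₀ ^ 2 * ‖A‖ * ‖q‖) ^ 2 := by
  have hc₀ : 0 ≤ c₀ := (abs_nonneg _).trans (hφ 0)
  set Φq := dOp (fun i => φ (h * ω i)) q
  have hΦ : ‖Φq‖ ≤ c₀ * ‖q‖ := norm_dOp_le hc₀ (fun i => hφ _) q
  have hAΦ : ‖A Φq‖ ≤ ‖A‖ * (c₀ * ‖q‖) := A.le_opNorm_of_le hΦ
  have hcos : |⟪dOp (fun i => Real.cos (h * ω i)) Φq, A Φq⟫_ℝ| ≤ c₀ ^ 2 * ‖A‖ * ‖q‖ ^ 2 :=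
    calc _ ≤ ‖dOp (fun i => Real.cos (h * ω i)) Φq‖ * ‖A Φq‖ := abs_real_inner_le_norm _ _
      _ ≤ (1 * ‖Φq‖) * ‖A Φq‖ := by
        gcongr; exact norm_dOp_le zero_le_one (fun i => Real.abs_cos_le_one _) Φq
      _ ≤ (c₀ * ‖q‖) * (‖A‖ * (c₀ * ‖q‖)) := by rw [one_mul]; gcongr
      _ = c₀ ^ 2 * ‖A‖ * ‖q‖ ^ 2 := by ring
  have hkick : |h| * ‖dOp (fun i => ψ₁ (h * ω i)) (A Φq)‖ ≤ c₀ ^ 2 * ‖A‖ * ‖q‖ :=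
    calc _ ≤ 1 * (c₀ * ‖A Φq‖) := by
          gcongr
          exact norm_dOp_le hc₀ (fun i => hψ _) _
      _ ≤ 1 * (c₀ * (‖A‖ * (c₀ * ‖q‖))) := by gcongr
      _ = c₀ ^ 2 * ‖A‖ * ‖q‖ := by ring
  have hkick2 : h ^ 2 * ‖dOp (fun i => ψ₁ (h * ω i)) (A Φq)‖ ^ 2 ≤ (c₀ ^ 2 * ‖A‖ * ‖q‖) ^ 2 := by
    rw [← sq_abs h, ← mul_pow]
    exact pow_le_pow_left₀ (by positivity) hkick 2
  rw [modEnergy, re_inner_eq_real_inner, abs_le]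
  constructor <;> nlinarith [abs_le.1 hcos, sq_nonneg (h * ‖dOp (fun i => ψ₁ (h * ω i)) (A Φq)‖)]

theorem half_norm_sq_add_half_norm_sq_le_modEnergy (hh : |h| ≤ 1) (hψ : ∀ ξ, |ψ₁ ξ| ≤ c₀)
    (hφ : ∀ ξ, |φ ξ| ≤ c₀) {ωmin : ℝ} (hmin : ∀ i, ωmin ≤ ω i)
    (hgap : (1 / 2) * c₀ ^ 2 * ‖A‖ + 1 ≤ ωmin) (q p : EuclideanSpace ℂ (Fin d)) :
    (1 / 2) * ‖q‖ ^ 2 + (1 / 2) * ‖p‖ ^ 2 ≤ modEnergy h ω ψ₁ φ A q p := by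
  have hκ : 0 ≤ c₀ ^ 2 * ‖A‖ := by positivity
  have hωmin : 0 ≤ ωmin := by linarith
  have hΩ : ((1 / 2) * c₀ ^ 2 * ‖A‖ + 1) ^ 2 * ‖q‖ ^ 2 ≤ ‖dOp ω q‖ ^ 2 :=
    calc _ = (((1 / 2) * c₀ ^ 2 * ‖A‖ + 1) * ‖q‖) ^ 2 := by ring
      _ ≤ (ωmin * ‖q‖) ^ 2 := by gcongr
      _ ≤ ‖dOp ω q‖ ^ 2 := pow_le_pow_left₀ (by positivity) (mul_norm_le_norm_dOp hωmin hmin q) 2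
  have hpert := abs_le.1 (abs_modEnergy_sub_le ω A hh hψ hφ q p)
  nlinarith [hpert.1, hΩ, sq_nonneg ‖q‖, mul_nonneg hκ (sq_nonneg ‖q‖)]

theorem abs_modEnergy_le (hh : |h| ≤ 1) (hψ : ∀ ξ, |ψ₁ ξ| ≤ c₀) (hφ : ∀ ξ, |φ ξ| ≤ c₀)
    (q p : EuclideanSpace ℂ (Fin d)) :
    |modEnergy h ω ψ₁ φ A q p| ≤ (1 / 2) * ‖dOp ω q‖ ^ 2 + (1 / 2) * ‖p‖ ^ 2
      + ((1 / 2) * (c₀ ^ 2 * ‖A‖ * ‖q‖ ^ 2) + (1 / 8) * (c₀ ^ 2 * ‖A‖ * ‖q‖) ^ 2) := by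
  have hE : 0 ≤ (1 / 2) * ‖dOp ω q‖ ^ 2 + (1 / 2) * ‖p‖ ^ 2 := by positivity
  have := (abs_sub_abs_le_abs_sub _ _).trans (abs_modEnergy_sub_le ω A hh hψ hφ q p)
  rw [abs_of_nonneg hE] at this
  linarith

end Bounds

/-- Lemma 3, unconditional bound on the numerical solution: if all frequencies
are nonzero and `ω ≥ ½c₀²‖A‖ + 1`, then `½‖q_n‖² + ½‖q̇_n‖² ≤ |ℋ(q_0,q̇_0)|` for all `n`, and
consequently `‖q_n‖` is bounded by a constant depending only on
`c₀, ‖A‖, ‖q_0‖, ‖Ωq_0‖, ‖q̇_0‖`. -/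
theorem unconditional_bound_numerical_solution :
    ∃ C : ℝ → ℝ → ℝ → ℝ → ℝ → ℝ,
      ∀ {d : ℕ} (h : ℝ), 0 < h → h ≤ 1 →
      ∀ (ω : Fin d → ℝ), (∀ i, 0 ≤ ω i) → (∀ i, ω i ≠ 0) →
      ∀ (ψ₁ φ : ℝ → ℝ) (c₀ : ℝ),
        (∀ ξ : ℝ, ψ₁ ξ = sinc ξ * φ ξ) →
        (∀ ξ : ℝ, |ψ₁ ξ| ≤ c₀) → (∀ ξ : ℝ, |φ ξ| ≤ c₀) →
      ∀ A : EuclideanSpace ℂ (Fin d) →L[ℂ] EuclideanSpace ℂ (Fin d), IsSelfAdjoint A →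
      ∀ ωmin : ℝ, (∃ i, ω i = ωmin) → (∀ i, ωmin ≤ ω i) →
        (1 / 2) * c₀ ^ 2 * ‖A‖ + 1 ≤ ωmin →
      ∀ q p : ℕ → EuclideanSpace ℂ (Fin d),
        (∀ n : ℕ, q (n + 1) = trigStepQ h ω ψ₁ φ A (q n) (p n)) →
        (∀ n : ℕ, p (n + 1) = trigStepP h ω ψ₁ φ A (q n) (p n)) →
      ∀ n : ℕ,
        (1 / 2) * ‖q n‖ ^ 2 + (1 / 2) * ‖p n‖ ^ 2 ≤ |modEnergy h ω ψ₁ φ A (q 0) (p 0)| ∧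
        ‖q n‖ ≤ C c₀ ‖A‖ ‖q 0‖ ‖dOp ω (q 0)‖ ‖p 0‖ := by
  refine ⟨fun c₀ normA normq normΩq normp =>
    √(normΩq ^ 2 + normp ^ 2 + c₀ ^ 2 * normA * normq ^ 2 + (1 / 4) * (c₀ ^ 2 * normA * normq) ^ 2),
    ?_⟩
  intro d h hh₀ hh₁ ω _ _ ψ₁ φ c₀ hψφ hψ hφ A hA ωmin _ hmin hgap q p hq hp n
  have hh : |h| ≤ 1 := abs_le.2 ⟨by linarith, hh₁⟩
  have hconserved : modEnergy h ω ψ₁ φ A (q n) (p n) = modEnergy h ω ψ₁ φ A (q 0) (p 0) := by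
    induction n with
    | zero => rfl
    | succ n ih => rw [hq, hp, modEnergy_trigStep h ω hψφ hA, ih]
  have hbound : (1 / 2) * ‖q n‖ ^ 2 + (1 / 2) * ‖p n‖ ^ 2 ≤ |modEnergy h ω ψ₁ φ A (q 0) (p 0)| :=
    hconserved ▸ (half_norm_sq_add_half_norm_sq_le_modEnergy ω A hh hψ hφ hmin hgap _ _).trans
      (le_abs_self _)
  have hinit := abs_modEnergy_le ω A hh hψ hφ (q 0) (p 0)
  refine ⟨hbound, Real.le_sqrt_of_sq_le ?_⟩
  linarith [sq_nonneg ‖p n‖]
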